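/- arXiv:0801.3512 — 3 statements merged into one kernel-verified Lean document; each statement's English description precedes it below -/
import Mathlib

section
/- Let A = {L_0, L_1, …, L_n} be a line arrangement in ℙ²(ℂ) of type C_k with k ≤ 2, i.e. such that there exist at most two lines among L_0, …, L_n whose union contains every point of multiplicity at least 3 in A. Then every rank one local system on the complement M is admissible: for any λ_0, …, λ_n ∈ ℂ* with λ_0 ⋯ λ_n = 1 there exist residues a_0, …, a_n ∈ ℂ with exp(2πi a_j) = λ_j for all j, ∑_{j=0}^n a_j = 0, a_j ∉ ℤ_{>0} for all j, and a(p) = ∑_{j : p ∈ L_j} a_j ∉ ℤ_{>0} for every point p of multiplicity at least 3 in A. -/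
/-!
Choose residues `b j` with `exp (2πi b j) = λ j` and `0 ≤ Re b j < 1`; their sum is an integer
`K ≥ 0`. Only the residues of the two covering lines are changed, by integers: `t` is subtracted
at `i₁` and `K - t` at `i₂`, which makes the total zero and keeps the monodromy. A point on both
lines then has `a(p) = -∑_{j ∉ p} b j`, of real part `≤ 0`. A point `p` on `L i₁` alone only asks
`t` to be at least `∑_{j ∋ p} b j` when that is an integer, and a point `q` on `L i₂` alone asks
`t` to be at most `K - ∑_{j ∋ q} b j` when that is an integer. These constraints are compatible:
`p ≠ q` share at most one line, so the two sums add up to less than `K + 1`.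
-/

noncomputable section

open Finset Complex

attribute [local instance] Classical.propDecidable

/-- The complex projective plane ℙ²(ℂ). -/
abbrev PP : Type := Projectivization ℂ (Fin 3 → ℂ)

/-- A projective line in ℙ²(ℂ), given as a nonzero linear form up to scalar. -/
abbrev PLine : Type := Projectivization ℂ (Module.Dual ℂ (Fin 3 → ℂ))

/-- Membership of a point on a projective line. -/
def memL (p : PP) (L : PLine) : Prop := L.rep p.rep = 0

/-- A point has multiplicity at least 3 in the arrangement `L`. -/
def multGe3 {N : ℕ} (L : Fin N → PLine) (p : PP) : Prop :=
  3 ≤ (Finset.univ.filter fun j => memL p (L j)).card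

/-- The strictly positive integers, inside ℂ. -/
def PosIntC : Set ℂ := {z | ∃ m : ℤ, 0 < m ∧ z = (m : ℂ)}

/-- The strictly positive integers, inside ℝ. -/
def PosIntR : Set ℝ := {x | ∃ m : ℤ, 0 < m ∧ x = (m : ℝ)}

/-- `a(p)`: the sum of residues over lines through `p`. -/
def aSum {N : ℕ} (L : Fin N → PLine) (a : Fin N → ℂ) (p : PP) : ℂ :=
  ∑ j ∈ Finset.univ.filter (fun j => memL p (L j)), a j

/-- Admissibility of the rank one local system with monodromies `lam`. -/
def Admissible {N : ℕ} (L : Fin N → PLine) (lam : Fin N → ℂˣ) : Prop :=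
  ∃ a : Fin N → ℂ,
    (∀ j, Complex.exp (2 * (Real.pi : ℂ) * Complex.I * a j) = (lam j : ℂ)) ∧
    (∑ j, a j = 0) ∧
    (∀ j, a j ∉ PosIntC) ∧
    (∀ p : PP, multGe3 L p → aSum L a p ∉ PosIntC)

namespace Projectivization

variable {K V : Type*} [Field K] [AddCommGroup V] [Module K V]

theorem finrank_span_rep_pair {u v : Projectivization K V} (h : u ≠ v) :
    Module.finrank K (Submodule.span K (Set.range ![u.rep, v.rep])) = 2 := by
  have hind := (independent_iff.mp ((independent_pair_iff_ne u v).mpr h))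
  rw [show Projectivization.rep ∘ ![u, v] = ![u.rep, v.rep] by ext i; fin_cases i <;> rfl] at hind
  simpa using finrank_span_eq_card hind

theorem eq_of_rep_apply_eq_zero [FiniteDimensional K V] (hV : Module.finrank K V = 3)
    {p q : Projectivization K V} (hpq : p ≠ q) {M₁ M₂ : Projectivization K (Module.Dual K V)}
    (h₁p : M₁.rep p.rep = 0) (h₁q : M₁.rep q.rep = 0)
    (h₂p : M₂.rep p.rep = 0) (h₂q : M₂.rep q.rep = 0) : M₁ = M₂ := by
  by_contra hM
  have hle : Submodule.span K (Set.range ![M₁.rep, M₂.rep]) ≤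
      (Submodule.span K (Set.range ![p.rep, q.rep])).dualAnnihilator := by
    rw [Submodule.span_le, Submodule.coe_dualAnnihilator_span]
    rintro _ ⟨i, rfl⟩ _ ⟨k, rfl⟩
    fin_cases i <;> fin_cases k <;> assumption
  have hdim := Subspace.finrank_add_finrank_dualAnnihilator_eq
    (Submodule.span K (Set.range ![p.rep, q.rep]))
  have hmono := Submodule.finrank_mono hle
  rw [finrank_span_rep_pair hpq, hV] at hdim
  rw [finrank_span_rep_pair hM] at hmono
  omega

end Projectivization

open Real

theorem exists_between_of_forall_le_of_bddAbove {α : Type*} [ConditionallyCompleteLattice α]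
    {s t : Set α} (hs : BddAbove s) (ht : BddBelow t) (hst : ∀ a ∈ s, ∀ b ∈ t, a ≤ b) :
    (upperBounds s ∩ lowerBounds t).Nonempty := by
  rcases s.eq_empty_or_nonempty with rfl | hne
  · rwa [upperBounds_empty, Set.univ_inter]
  · exact ⟨sSup s, fun a ha => le_csSup hs ha, fun b hb => csSup_le hne fun a ha => hst a ha b hb⟩

theorem sum_add_sum_lt_sum_add_one {ι : Type*} [Fintype ι] [DecidableEq ι] {r : ι → ℝ}
    (h0 : ∀ j, 0 ≤ r j) (h1 : ∀ j, r j < 1) {F G : Finset ι} (hFG : #(F ∩ G) ≤ 1) :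
    ∑ j ∈ F, r j + ∑ j ∈ G, r j < ∑ j, r j + 1 := by
  have hunion : ∑ j ∈ F ∪ G, r j ≤ ∑ j, r j := sum_le_univ_sum_of_nonneg h0
  have hinter : ∑ j ∈ F ∩ G, r j < 1 := by
    rcases (F ∩ G).eq_empty_or_nonempty with he | hne
    · simp [he]
    · obtain ⟨j, hj⟩ := card_eq_one.mp (le_antisymm hFG hne.card_pos)
      simpa [hj] using h1 j
  rw [← sum_union_inter]
  linarith

theorem notMem_posIntC_of_re_lt_one {z : ℂ} (h : z.re < 1) : z ∉ PosIntC := by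
  rintro ⟨m, hm, rfl⟩
  have : (1 : ℝ) ≤ m := by exact_mod_cast hm
  simp only [intCast_re] at h
  linarith

theorem exp_two_pi_I_mul_sub_intCast (z : ℂ) (m : ℤ) :
    exp (2 * π * I * (z - m)) = exp (2 * π * I * z) := by
  rw [mul_sub, Complex.exp_sub, mul_comm _ (m : ℂ), exp_int_mul_two_pi_mul_I, div_one]

theorem exists_exp_two_pi_I_mul_eq_and_re_mem_Ico (z : ℂˣ) :
    ∃ b : ℂ, exp (2 * π * I * b) = z ∧ 0 ≤ b.re ∧ b.re < 1 := by
  set c := log z / (2 * π * I)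
  refine ⟨c - ⌊c.re⌋, ?_, ?_, ?_⟩
  · rw [exp_two_pi_I_mul_sub_intCast, mul_div_cancel₀ _ two_pi_I_ne_zero, exp_log z.ne_zero]
  · simp [Int.fract_nonneg]
  · simpa using Int.fract_lt_one c.re

theorem exists_intCast_eq_of_exp_two_pi_I_mul_eq_one {x : ℂ} (h : exp (2 * π * I * x) = 1) :
    ∃ K : ℤ, x = K := by
  obtain ⟨K, hK⟩ := exp_eq_one_iff.mp h
  exact ⟨K, mul_left_cancel₀ two_pi_I_ne_zero (by rw [hK]; ring)⟩

section ResidueShift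

variable {ι : Type*}

def residueShift [DecidableEq ι] (i₁ i₂ : ι) (K t : ℤ) : ι → ℤ :=
  Pi.single i₁ t + Pi.single i₂ (K - t)

theorem sum_residueShift [DecidableEq ι] (i₁ i₂ : ι) (K t : ℤ) (F : Finset ι) :
    ∑ j ∈ F, residueShift i₁ i₂ K t j =
      (if i₁ ∈ F then t else 0) + (if i₂ ∈ F then K - t else 0) := by
  simp only [residueShift, Pi.add_apply, sum_add_distrib, sum_pi_single']

variable {b : ι → ℂ} {K : ℤ}

theorem re_sum_le_of_sum_eq [Fintype ι] (h0 : ∀ j, 0 ≤ (b j).re) (hK : ∑ j, b j = K)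
    (F : Finset ι) :
    (∑ j ∈ F, b j).re ≤ K := by
  calc (∑ j ∈ F, b j).re = ∑ j ∈ F, (b j).re := re_sum _ _
    _ ≤ ∑ j, (b j).re := sum_le_univ_sum_of_nonneg h0
    _ = K := by rw [← re_sum, hK, intCast_re]

theorem exists_sum_sub_residueShift_notMem_posIntC [Fintype ι] [DecidableEq ι]
    {S : Set (Finset ι)} {i₁ i₂ : ι}
    (hcov : ∀ F ∈ S, i₁ ∈ F ∨ i₂ ∈ F) (hlin : S.Pairwise fun F G => #(F ∩ G) ≤ 1)
    (h0 : ∀ j, 0 ≤ (b j).re) (h1 : ∀ j, (b j).re < 1) (hK : ∑ j, b j = K) :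
    ∃ t : ℤ, ∀ F ∈ S, ∑ j ∈ F, (b j - residueShift i₁ i₂ K t j) ∉ PosIntC := by
  have hre := re_sum_le_of_sum_eq h0 hK
  set lower := {m : ℤ | ∃ F ∈ S, i₁ ∈ F ∧ i₂ ∉ F ∧ ∑ j ∈ F, b j = m}
  set upper := {M : ℤ | ∃ G ∈ S, i₂ ∈ G ∧ i₁ ∉ G ∧ ∑ j ∈ G, b j = K - M}
  have hlower : BddAbove lower := by
    refine ⟨K, ?_⟩
    rintro m ⟨F, -, -, -, hF⟩
    have := hre F
    rw [hF, intCast_re] at this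
    exact_mod_cast this
  have hupper : BddBelow upper := by
    refine ⟨0, ?_⟩
    rintro M ⟨G, -, -, -, hG⟩
    have := hre G
    rw [hG] at this
    have : (K : ℝ) - M ≤ K := by simpa using this
    have : (0 : ℝ) ≤ M := by linarith
    exact_mod_cast this
  have hsep : ∀ m ∈ lower, ∀ M ∈ upper, m ≤ M := by
    rintro m ⟨F, hF, hi₁F, -, hFm⟩ M ⟨G, hG, -, hi₁G, hGM⟩
    have hFG : F ≠ G := by rintro rfl; exact hi₁G hi₁F
    have hlt := sum_add_sum_lt_sum_add_one h0 h1 (hlin hF hG hFG)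
    simp only [← re_sum, hFm, hGM, hK] at hlt
    simp only [sub_re, intCast_re] at hlt
    have : (m : ℝ) < M + 1 := by linarith
    have : m < M + 1 := by exact_mod_cast this
    omega
  obtain ⟨t, htlower, htupper⟩ := exists_between_of_forall_le_of_bddAbove hlower hupper hsep
  refine ⟨t, fun F hF => ?_⟩
  rintro ⟨k, hk, hsum⟩
  rw [sum_sub_distrib, ← Int.cast_sum, sum_residueShift] at hsum
  by_cases h₁ : i₁ ∈ F <;> by_cases h₂ : i₂ ∈ F <;>
    simp only [h₁, h₂, if_true, if_false, add_zero, zero_add] at hsum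
  · have := hre F
    rw [eq_add_of_sub_eq hsum] at this
    have : (k : ℝ) + K ≤ K := by simpa using this
    have : (0 : ℝ) < k := by exact_mod_cast hk
    linarith
  · have := htlower (show k + t ∈ lower from
      ⟨F, hF, h₁, h₂, by rw [eq_add_of_sub_eq hsum]; push_cast; ring⟩)
    omega
  · have := htupper (show t - k ∈ upper from
      ⟨F, hF, h₂, h₁, by rw [eq_add_of_sub_eq hsum]; push_cast; ring⟩)
    omega
  · exact (hcov F hF).elim h₁ h₂

theorem card_singleton_inter_le_one [DecidableEq ι] (i : ι) (G : Finset ι) :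
    #({i} ∩ G) ≤ 1 :=
  (card_le_card inter_subset_left).trans (card_singleton i).le

theorem exists_residueShift_admissible [Fintype ι] [DecidableEq ι]
    {S : Set (Finset ι)} {i₁ i₂ : ι}
    (hcov : ∀ F ∈ S, i₁ ∈ F ∨ i₂ ∈ F) (hlin : S.Pairwise fun F G => #(F ∩ G) ≤ 1)
    (h0 : ∀ j, 0 ≤ (b j).re) (h1 : ∀ j, (b j).re < 1) (hK : ∑ j, b j = K) :
    ∃ t : ℤ, ∑ j, (b j - residueShift i₁ i₂ K t j) = 0 ∧
      (∀ j, b j - residueShift i₁ i₂ K t j ∉ PosIntC) ∧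
      ∀ F ∈ S, ∑ j ∈ F, (b j - residueShift i₁ i₂ K t j) ∉ PosIntC := by
  have hsingle (i : ι) (G : Finset ι) : #({i} ∩ G) ≤ 1 ∧ #(G ∩ {i}) ≤ 1 :=
    ⟨card_singleton_inter_le_one i G, inter_comm G {i} ▸ card_singleton_inter_le_one i G⟩
  -- The singletons `{i₁}`, `{i₂}` turn the conditions on `a i₁`, `a i₂` into point conditions.
  obtain ⟨t, ht⟩ := exists_sum_sub_residueShift_notMem_posIntC (S := insert {i₁} (insert {i₂} S))
    (by
      rintro F (rfl | rfl | hF)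
      exacts [Or.inl (mem_singleton_self _), Or.inr (mem_singleton_self _), hcov F hF])
    (by
      rw [Set.pairwise_insert, Set.pairwise_insert]
      exact ⟨⟨hlin, fun G _ _ => hsingle i₂ G⟩, fun G _ _ => hsingle i₁ G⟩)
    h0 h1 hK
  refine ⟨t, ?_, fun j => ?_, fun F hF => ht F (by simp [hF])⟩
  · rw [sum_sub_distrib, ← Int.cast_sum, sum_residueShift, hK]
    simp
  · by_cases hj : j = i₁ ∨ j = i₂
    · simpa using ht {j} (by rcases hj with rfl | rfl <;> simp)
    · push Not at hj
      simpa [residueShift, Pi.single_apply, hj.1, hj.2] using notMem_posIntC_of_re_lt_one (h1 j)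

end ResidueShift

def linesThrough {N : ℕ} (L : Fin N → PLine) (p : PP) : Finset (Fin N) :=
  univ.filter fun j => memL p (L j)

theorem card_linesThrough_inter_le_one {N : ℕ} {L : Fin N → PLine} (hL : Function.Injective L)
    {p q : PP} (hpq : p ≠ q) : #(linesThrough L p ∩ linesThrough L q) ≤ 1 := by
  refine card_le_one.mpr fun i hi j hj => hL ?_
  simp only [linesThrough, mem_inter, mem_filter, mem_univ, true_and] at hi hj
  exact Projectivization.eq_of_rep_apply_eq_zero (by simp) hpq hi.1 hi.2 hj.1 hj.2

/-- If `A = {L 0, …, L n}` is a line arrangement in `ℙ²(ℂ)` of type `C_k` with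
`k ≤ 2` (i.e. there are at most two lines among them whose union contains every point of
multiplicity at least 3), then every rank one local system on the complement is admissible. -/
theorem admissible_of_classC2 {n : ℕ} (L : Fin (n + 1) → PLine)
    (hdist : Function.Injective L)
    (i₁ i₂ : Fin (n + 1))
    (hcov : ∀ p : PP, multGe3 L p → memL p (L i₁) ∨ memL p (L i₂))
    (lam : Fin (n + 1) → ℂˣ) (hlam : ∏ j, lam j = 1) :
    Admissible L lam := by
  choose b hb hb0 hb1 using fun j => exists_exp_two_pi_I_mul_eq_and_re_mem_Ico (lam j)
  obtain ⟨K, hK⟩ : ∃ K : ℤ, ∑ j, b j = K := by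
    refine exists_intCast_eq_of_exp_two_pi_I_mul_eq_one ?_
    rw [mul_sum, Complex.exp_sum]
    simp_rw [hb, ← Units.coe_prod, hlam, Units.val_one]
  obtain ⟨t, hsum, hres, hpts⟩ := exists_residueShift_admissible
    (S := linesThrough L '' {p | multGe3 L p}) (i₁ := i₁) (i₂ := i₂)
    (by rintro _ ⟨p, hp, rfl⟩; simpa [linesThrough] using hcov p hp)
    (by rintro _ ⟨p, -, rfl⟩ _ ⟨q, -, rfl⟩ hne
        exact card_linesThrough_inter_le_one hdist (ne_of_apply_ne _ hne))
    hb0 hb1 hK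
  refine ⟨fun j => b j - residueShift i₁ i₂ K t j, fun j => ?_, hsum, hres,
    fun p hp => hpts _ ⟨p, hp, rfl⟩⟩
  rw [exp_two_pi_I_mul_sub_intCast, hb]
end
end

section
/- Let L_0, L_1, …, L_n be pairwise distinct lines in ℙ²(ℂ) and a_0, …, a_n ∈ ℂ with ∑_{j=0}^n a_j = 0 and Re(a_j) ∈ [0,1) for all j ≥ 1. Let p and q be two distinct points of ℙ² with p ∉ L_0 and q ∈ L_0. Then Re(a_0) + ∑_{j ≥ 1, p ∈ L_j} Re(a_j) + ∑_{j ≥ 1, q ∈ L_j} Re(a_j) < 1. (This is the key inequality in the proof of the C_2 case: since p ≠ q, at most one of the lines L_1, …, L_n passes through both p and q.) -/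
noncomputable section

open Finset Complex

attribute [local instance] Classical.propDecidable

/-! Two distinct points of `ℙ²` span a plane of `ℂ³`, whose annihilator is one-dimensional, so at most
one `L j` passes through both `p` and `q`. The residues `Re (a j)`, `j ≠ 0`, lie in `[0, 1)` and sum to
`-Re (a 0)`; hence the two sums add up to at most `-Re (a 0)` plus the residue of that common line,
which is `< 1`. -/

namespace Projectivization

variable {K V : Type*} [Field K] [AddCommGroup V] [Module K V]

open Module Submodule
open scoped LinearAlgebra.Projectivization

theorem finrank_span_rep_pair_s5 {p q : ℙ K V} (hpq : p ≠ q) :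
    finrank K (span K {p.rep, q.rep}) = 2 := by
  have := finrank_span_eq_card (independent_iff.1 ((independent_pair_iff_ne p q).2 hpq))
  rwa [Set.range_comp, Matrix.range_cons_cons_empty, Set.image_pair, Fintype.card_fin] at this

theorem rep_mem_dualAnnihilator_span_pair {x y : V} {f : ℙ K (Dual K V)}
    (hx : f.rep x = 0) (hy : f.rep y = 0) : f.rep ∈ (span K {x, y}).dualAnnihilator :=
  (mem_dualAnnihilator _).2 fun _ hw =>
    (span_le (p := LinearMap.ker f.rep)).2 (Set.pair_subset hx hy) hw

theorem eq_of_rep_apply_eq_zero_s5 [FiniteDimensional K V] (hV : finrank K V = 3)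
    {p q : ℙ K V} (hpq : p ≠ q) {f g : ℙ K (Dual K V)}
    (hfp : f.rep p.rep = 0) (hfq : f.rep q.rep = 0)
    (hgp : g.rep p.rep = 0) (hgq : g.rep q.rep = 0) : f = g := by
  have hA : finrank K (span K {p.rep, q.rep}).dualAnnihilator = 1 := by
    have := Subspace.finrank_add_finrank_dualAnnihilator_eq (span K {p.rep, q.rep})
    rw [finrank_span_rep_pair_s5 hpq, hV] at this
    omega
  by_contra hfg
  have hle : span K {f.rep, g.rep} ≤ (span K {p.rep, q.rep}).dualAnnihilator :=
    span_le.2 (Set.pair_subset (rep_mem_dualAnnihilator_span_pair hfp hfq)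
      (rep_mem_dualAnnihilator_span_pair hgp hgq))
  have := finrank_mono hle
  rw [finrank_span_rep_pair_s5 hfg, hA] at this
  omega

end Projectivization

theorem eq_of_memL_of_memL {p q : PP} (hpq : p ≠ q) {M M' : PLine}
    (hMp : memL p M) (hMq : memL q M) (hM'p : memL p M') (hM'q : memL q M') : M = M' :=
  Projectivization.eq_of_rep_apply_eq_zero_s5 (by simp) hpq hMp hMq hM'p hM'q

theorem Finset.sum_add_sum_lt_sum_add_one {ι R : Type*} [DecidableEq ι] [Ring R] [LinearOrder R]
    [IsStrictOrderedRing R] {S P Q : Finset ι} {w : ι → R} (hPS : P ⊆ S) (hQS : Q ⊆ S)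
    (hPQ : #(P ∩ Q) ≤ 1) (hw : ∀ j ∈ S, w j ∈ Set.Ico 0 1) :
    ∑ j ∈ P, w j + ∑ j ∈ Q, w j < ∑ j ∈ S, w j + 1 := by
  have hunion : ∑ j ∈ P ∪ Q, w j ≤ ∑ j ∈ S, w j :=
    sum_le_sum_of_subset_of_nonneg (union_subset hPS hQS) fun j hj _ => (hw j hj).1
  have hinter : ∑ j ∈ P ∩ Q, w j < 1 := by
    rcases Nat.le_one_iff_eq_zero_or_eq_one.1 hPQ with hempty | hsingle
    · rw [card_eq_zero.1 hempty, sum_empty]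
      exact one_pos
    · obtain ⟨j, hj⟩ := card_eq_one.1 hsingle
      have hjS : j ∈ S := hPS (mem_inter.1 (hj ▸ mem_singleton_self j)).1
      rw [hj, sum_singleton]
      exact (hw j hjS).2
  rw [← sum_union_inter]
  exact add_lt_add_of_le_of_lt hunion hinter

theorem key_inequality_C2_general {n : ℕ} (L : Fin (n + 1) → PLine)
    (hdist : Function.Injective L) (a : Fin (n + 1) → ℂ)
    (hsum : ∑ j, a j = 0)
    (hre : ∀ j, j ≠ 0 → (a j).re ∈ Set.Ico (0 : ℝ) 1)
    (p q : PP) (hpq : p ≠ q) :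
    (a 0).re + (∑ j ∈ Finset.univ.filter (fun j => j ≠ 0 ∧ memL p (L j)), (a j).re)
      + (∑ j ∈ Finset.univ.filter (fun j => j ≠ 0 ∧ memL q (L j)), (a j).re) < 1 := by
  have hre_sum : (a 0).re + ∑ j ∈ univ.erase 0, (a j).re = 0 := by
    rw [add_sum_erase _ (fun j => (a j).re) (mem_univ 0), ← re_sum, hsum, zero_re]
  have hcommon : #((univ.filter fun j => j ≠ 0 ∧ memL p (L j)) ∩
      univ.filter fun j => j ≠ 0 ∧ memL q (L j)) ≤ 1 :=
    card_le_one.2 fun j hj k hk => by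
      simp only [mem_inter, mem_filter] at hj hk
      exact hdist (eq_of_memL_of_memL hpq hj.1.2.2 hj.2.2.2 hk.1.2.2 hk.2.2.2)
  have hsub : ∀ r : PP, (univ.filter fun j => j ≠ 0 ∧ memL r (L j)) ⊆ univ.erase 0 :=
    fun r j hj => mem_erase.2 ⟨(mem_filter.1 hj).2.1, mem_univ j⟩
  have hsum_lt := sum_add_sum_lt_sum_add_one (w := fun j => (a j).re) (hsub p) (hsub q) hcommon
    fun j hj => hre j (ne_of_mem_erase hj)
  linarith

/-- Key inequality in the proof of the `C₂` case: for pairwise distinct lines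
`L 0, …, L n`, residues with total sum `0` and `Re (a j) ∈ [0,1)` for `j ≥ 1`, and distinct
points `p ∉ L 0`, `q ∈ L 0`, one has
`Re (a 0) + ∑_{j ≥ 1, p ∈ L j} Re (a j) + ∑_{j ≥ 1, q ∈ L j} Re (a j) < 1`. -/
theorem key_inequality_C2 {n : ℕ} (L : Fin (n + 1) → PLine)
    (hdist : Function.Injective L) (a : Fin (n + 1) → ℂ)
    (hsum : ∑ j, a j = 0)
    (hre : ∀ j, j ≠ 0 → (a j).re ∈ Set.Ico (0 : ℝ) 1)
    (p q : PP) (hpq : p ≠ q) (hp : ¬ memL p (L 0)) (hq : memL q (L 0)) :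
    (a 0).re + (∑ j ∈ Finset.univ.filter (fun j => j ≠ 0 ∧ memL p (L j)), (a j).re)
      + (∑ j ∈ Finset.univ.filter (fun j => j ≠ 0 ∧ memL q (L j)), (a j).re) < 1 :=
  key_inequality_C2_general L hdist a hsum hre p q hpq
end
end

section
/- Let L_0, L_1, …, L_n be pairwise distinct lines in ℙ²(ℂ) and a_0, …, a_n ∈ ℂ with ∑_{j=0}^n a_j = 0 and Re(a_j) ∈ [0,1) for all j ≥ 1. Let p_1, p_2, q be points of ℙ² with p_1 ∉ L_0, p_2 ∉ L_0, q ∈ L_0. Assume that no line L_j with j ≥ 1 contains all three of p_1, p_2, q, and that at most one index j ≥ 1 is such that L_j contains at least two of the points p_1, p_2, q. Then Re(a_0) + ∑_{j ≥ 1, p_1 ∈ L_j} Re(a_j) + ∑_{j ≥ 1, p_2 ∈ L_j} Re(a_j) + ∑_{j ≥ 1, q ∈ L_j} Re(a_j) < 1. (This is the key inequality in the proof of the C_3 proposition.) -/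
noncomputable section

open Finset Complex

attribute [local instance] Classical.propDecidable

/-! Since the residues sum to zero, `Re a₀ = -∑_{j ≥ 1} Re aⱼ`, so the left-hand side is
`∑_{j ≥ 1} (cⱼ - 1) Re aⱼ`, where `cⱼ ≤ 2` is the number of the points `p₁, p₂, q` on `Lⱼ`.
All terms with `cⱼ ≤ 1` are `≤ 0` because `Re aⱼ ≥ 0`, and at most one term has `cⱼ = 2`;
it equals `Re aⱼ < 1`. -/

namespace KeyInequalityC3

variable {ι : Type*}

theorem sum_lt_one_of_subsingleton {s : Finset ι} {w : ι → ℝ}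
    (hs : ∀ j ∈ s, ∀ j' ∈ s, j = j') (hw : ∀ j ∈ s, w j < 1) : ∑ j ∈ s, w j < 1 := by
  obtain rfl | ⟨j, hj⟩ := s.eq_empty_or_nonempty
  · simp
  · rw [eq_singleton_iff_unique_mem.2 ⟨hj, fun j' hj' => hs j' hj' j hj⟩,
      sum_singleton]
    exact hw j hj

theorem ite_add_ite_add_ite_le {A B C : Prop} [Decidable A] [Decidable B] [Decidable C] {x : ℝ}
    (hx : 0 ≤ x) (hABC : ¬(A ∧ B ∧ C)) :
    (if A then x else 0) + (if B then x else 0) + (if C then x else 0)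
      ≤ x + if (A ∧ B) ∨ (A ∧ C) ∨ (B ∧ C) then x else 0 := by
  split_ifs <;> first | linarith | tauto

theorem sum_filter_add_sum_filter_add_sum_filter_lt {s : Finset ι} {w : ι → ℝ}
    {A B C : ι → Prop} [DecidablePred A] [DecidablePred B] [DecidablePred C]
    (hw : ∀ j ∈ s, w j ∈ Set.Ico 0 1) (hABC : ∀ j ∈ s, ¬(A j ∧ B j ∧ C j))
    (htwo : ∀ j ∈ s, ∀ j' ∈ s, (A j ∧ B j) ∨ (A j ∧ C j) ∨ (B j ∧ C j) →
      (A j' ∧ B j') ∨ (A j' ∧ C j') ∨ (B j' ∧ C j') → j = j') :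
    ∑ j ∈ s with A j, w j + ∑ j ∈ s with B j, w j + ∑ j ∈ s with C j, w j
      < 1 + ∑ j ∈ s, w j := by
  have hle := sum_le_sum fun j hj => ite_add_ite_add_ite_le (hw j hj).1 (hABC j hj)
  have hlt : ∑ j ∈ s with (A j ∧ B j) ∨ (A j ∧ C j) ∨ (B j ∧ C j), w j < 1 :=
    sum_lt_one_of_subsingleton
      (fun j hj j' hj' => htwo j (mem_filter.1 hj).1 j' (mem_filter.1 hj').1
        (mem_filter.1 hj).2 (mem_filter.1 hj').2)
      (fun j hj => (hw j (mem_filter.1 hj).1).2)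
  simp only [sum_add_distrib, ← sum_filter] at hle
  exact hle.trans_lt (by linarith)

theorem re_eq_neg_sum_re_of_sum_eq_zero [Fintype ι] [DecidableEq ι] {a : ι → ℂ}
    (ha : ∑ j, a j = 0) (i : ι) :
    (a i).re = -∑ j with j ≠ i, (a j).re := by
  have hre : ∑ j, (a j).re = 0 := by rw [← Complex.re_sum, ha, Complex.zero_re]
  rw [filter_ne', ← sum_erase_add _ _ (mem_univ i)] at *
  linarith

end KeyInequalityC3

open KeyInequalityC3 in
theorem key_inequality_C3_general {n : ℕ} (L : Fin (n + 1) → PLine)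
    (a : Fin (n + 1) → ℂ)
    (hsum : ∑ j, a j = 0)
    (hre : ∀ j, j ≠ 0 → (a j).re ∈ Set.Ico (0 : ℝ) 1)
    (p₁ p₂ q : PP)
    (hno3 : ∀ j, j ≠ 0 → ¬ (memL p₁ (L j) ∧ memL p₂ (L j) ∧ memL q (L j)))
    (h2 : ∀ j j' : Fin (n + 1),
      (j ≠ 0 ∧ ((memL p₁ (L j) ∧ memL p₂ (L j)) ∨ (memL p₁ (L j) ∧ memL q (L j)) ∨
        (memL p₂ (L j) ∧ memL q (L j)))) →
      (j' ≠ 0 ∧ ((memL p₁ (L j') ∧ memL p₂ (L j')) ∨ (memL p₁ (L j') ∧ memL q (L j')) ∨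
        (memL p₂ (L j') ∧ memL q (L j')))) → j = j') :
    (a 0).re + (∑ j ∈ Finset.univ.filter (fun j => j ≠ 0 ∧ memL p₁ (L j)), (a j).re)
      + (∑ j ∈ Finset.univ.filter (fun j => j ≠ 0 ∧ memL p₂ (L j)), (a j).re)
      + (∑ j ∈ Finset.univ.filter (fun j => j ≠ 0 ∧ memL q (L j)), (a j).re) < 1 := by
  have hmem : ∀ j ∈ univ.filter (· ≠ (0 : Fin (n + 1))), j ≠ 0 := fun j hj => (mem_filter.1 hj).2
  have hlt := sum_filter_add_sum_filter_add_sum_filter_lt (w := fun j => (a j).re)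
    (A := fun j => memL p₁ (L j)) (B := fun j => memL p₂ (L j)) (C := fun j => memL q (L j))
    (fun j hj => hre j (hmem j hj)) (fun j hj => hno3 j (hmem j hj))
    (fun j hj j' hj' hP hP' => h2 j j' ⟨hmem j hj, hP⟩ ⟨hmem j' hj', hP'⟩)
  simp only [filter_filter] at hlt
  linarith [re_eq_neg_sum_re_of_sum_eq_zero hsum 0]

/-- Key inequality in the proof of the `C₃` proposition: for pairwise distinct
lines `L 0, …, L n`, residues with total sum `0` and `Re (a j) ∈ [0,1)` for `j ≥ 1`, and points
`p₁, p₂ ∉ L 0`, `q ∈ L 0` such that no line `L j` with `j ≥ 1` contains all three points and at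
most one index `j ≥ 1` gives a line through at least two of them, one has
`Re (a 0) + ∑_{j ≥ 1, p₁ ∈ L j} Re (a j) + ∑_{j ≥ 1, p₂ ∈ L j} Re (a j)
  + ∑_{j ≥ 1, q ∈ L j} Re (a j) < 1`. -/
theorem key_inequality_C3 {n : ℕ} (L : Fin (n + 1) → PLine)
    (hdist : Function.Injective L) (a : Fin (n + 1) → ℂ)
    (hsum : ∑ j, a j = 0)
    (hre : ∀ j, j ≠ 0 → (a j).re ∈ Set.Ico (0 : ℝ) 1)
    (p₁ p₂ q : PP) (hp₁ : ¬ memL p₁ (L 0)) (hp₂ : ¬ memL p₂ (L 0)) (hq : memL q (L 0))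
    (hno3 : ∀ j, j ≠ 0 → ¬ (memL p₁ (L j) ∧ memL p₂ (L j) ∧ memL q (L j)))
    (h2 : ∀ j j' : Fin (n + 1),
      (j ≠ 0 ∧ ((memL p₁ (L j) ∧ memL p₂ (L j)) ∨ (memL p₁ (L j) ∧ memL q (L j)) ∨
        (memL p₂ (L j) ∧ memL q (L j)))) →
      (j' ≠ 0 ∧ ((memL p₁ (L j') ∧ memL p₂ (L j')) ∨ (memL p₁ (L j') ∧ memL q (L j')) ∨
        (memL p₂ (L j') ∧ memL q (L j')))) → j = j') :
    (a 0).re + (∑ j ∈ Finset.univ.filter (fun j => j ≠ 0 ∧ memL p₁ (L j)), (a j).re)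
      + (∑ j ∈ Finset.univ.filter (fun j => j ≠ 0 ∧ memL p₂ (L j)), (a j).re)
      + (∑ j ∈ Finset.univ.filter (fun j => j ≠ 0 ∧ memL q (L j)), (a j).re) < 1 :=
  key_inequality_C3_general L a hsum hre p₁ p₂ q hno3 h2
end
end
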